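/- arXiv:1908.04510 — 3 statements merged into one kernel-verified Lean document; each statement's English description precedes it below -/
import Mathlib

section
/- Let C >= 2 be an integer and p_i, p_j in [0,1] with p_i + p_j <= 1. Then 1 - (1-p_i)^C - (1-p_j)^C + (1-p_i-p_j)^C <= C(C-1) p_i p_j. -/
lemma pow_sub_pow_le' (x y : ℝ) (hy : 0 ≤ y) (hxy : y ≤ x) (hx : x ≤ 1) (n : ℕ) :
    x ^ n - y ^ n ≤ n * (x - y) := by
  induction n with
  | zero => simp
  | succ n ih =>
    have hxn : x ^ n ≤ 1 := pow_le_one₀ (hy.trans hxy) hx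
    have hyn : y ^ n ≤ 1 := pow_le_one₀ hy (hxy.trans hx)
    have hyn0 : 0 ≤ y ^ n := pow_nonneg hy n
    have h1 : x ^ (n+1) - y ^ (n+1) = x * (x ^ n - y ^ n) + y ^ n * (x - y) := by ring
    have h2 : x * (x ^ n - y ^ n) ≤ x ^ n - y ^ n := by
      nlinarith [pow_le_pow_left₀ hy hxy n]
    have h3 : y ^ n * (x - y) ≤ x - y := by nlinarith
    push_cast
    nlinarith

/-- Upper bound for the probability of connecting to both of two nodes. -/
theorem common_friend_prob_upper (C : ℕ) (hC : 2 ≤ C) (pi pj : ℝ)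
    (hpi : 0 ≤ pi) (hpj : 0 ≤ pj) (hpij : pi + pj ≤ 1) :
    1 - (1 - pi) ^ C - (1 - pj) ^ C + (1 - pi - pj) ^ C ≤ C * (C - 1) * pi * pj := by
  induction C, hC using Nat.le_induction with
  | base => push_cast; nlinarith
  | succ n hn ih =>
    have h1 : (1 - pi) ^ n - (1 - pi - pj) ^ n ≤ n * pj := by
      have := pow_sub_pow_le' (1 - pi) (1 - pi - pj) (by linarith) (by linarith) (by linarith) n
      linarith [this]
    have h2 : (1 - pj) ^ n - (1 - pi - pj) ^ n ≤ n * pi := by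
      have := pow_sub_pow_le' (1 - pj) (1 - pi - pj) (by linarith) (by linarith) (by linarith) n
      linarith [this]
    have e1 : (1 - pi) ^ (n+1) = (1 - pi) ^ n * (1 - pi) := pow_succ _ _
    have e2 : (1 - pj) ^ (n+1) = (1 - pj) ^ n * (1 - pj) := pow_succ _ _
    have e3 : (1 - pi - pj) ^ (n+1) = (1 - pi - pj) ^ n * (1 - pi - pj) := pow_succ _ _
    push_cast
    push_cast at ih
    nlinarith [mul_nonneg hpi hpj, mul_nonneg (mul_nonneg hpi hpj) (sub_nonneg.2 hpij)]
end

section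
/- Let C >= 2 be an integer and p_i, p_j in [0,1] with p_i + p_j <= 1. Then 1 - (1-p_i)^C - (1-p_j)^C + (1-p_i-p_j)^C >= C(C-1) p_i p_j * (1 - ((C-2)/2)*(p_i + p_j)). -/
/-- Key lemma: a refined bound on the difference of powers. -/
lemma pow_diff_key (u v : ℝ) (hu0 : 0 ≤ u) (huv : u ≤ v) (hv1 : v ≤ 1) :
    ∀ n : ℕ, (v - u) * ((n : ℝ) - (n : ℝ) * ((n : ℝ) - 1) / 2 * (u + v)) ≤
      (1 - u) ^ n - (1 - v) ^ n := by
  intro n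
  induction n with
  | zero => norm_num
  | succ n IH =>
    have hc : (1 : ℝ) - (n : ℝ) * v ≤ (1 - v) ^ n := by
      have h := one_add_mul_le_pow (show (-2 : ℝ) ≤ -v by linarith) n
      have e : (1 + -v) = 1 - v := by ring
      rw [e] at h
      linarith
    have hnn : (0 : ℝ) ≤ (n : ℝ) * ((n : ℝ) - 1) := by
      rcases Nat.eq_zero_or_pos n with h | h
      · simp [h]
      · have h1 : (1 : ℝ) ≤ (n : ℝ) := by exact_mod_cast h
        nlinarith
    have expand : (1 - u) ^ (n + 1) - (1 - v) ^ (n + 1) =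
        (1 - u) * ((1 - u) ^ n - (1 - v) ^ n) + (v - u) * (1 - v) ^ n := by ring
    have h1 : (1 - u) * ((v - u) * ((n : ℝ) - (n : ℝ) * ((n : ℝ) - 1) / 2 * (u + v))) ≤
        (1 - u) * ((1 - u) ^ n - (1 - v) ^ n) :=
      mul_le_mul_of_nonneg_left IH (by linarith)
    have h2 : (v - u) * (1 - (n : ℝ) * v) ≤ (v - u) * (1 - v) ^ n :=
      mul_le_mul_of_nonneg_left hc (by linarith)
    have hprod : 0 ≤ (v - u) * u * ((n : ℝ) * ((n : ℝ) - 1) / 2 * (u + v)) := by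
      apply mul_nonneg
      · exact mul_nonneg (by linarith) hu0
      · apply mul_nonneg
        · linarith
        · linarith
    push_cast
    rw [expand]
    nlinarith [h1, h2, hprod]

/-- Lower bound for the probability of connecting to both of two nodes. -/
theorem common_friend_prob_lower (C : ℕ) (hC : 2 ≤ C) (pi pj : ℝ)
    (hpi : 0 ≤ pi) (hpj : 0 ≤ pj) (hpij : pi + pj ≤ 1) :
    C * (C - 1) * pi * pj * (1 - ((C : ℝ) - 2) / 2 * (pi + pj)) ≤
      1 - (1 - pi) ^ C - (1 - pj) ^ C + (1 - pi - pj) ^ C := by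
  induction C, hC using Nat.le_induction with
  | base => push_cast; nlinarith []
  | succ n hn IH =>
    have k1 := pow_diff_key pi (pi + pj) hpi (by linarith) hpij n
    have k2 := pow_diff_key pj (pi + pj) hpj (by linarith) hpij n
    have hk1 : pi * ((pi + pj - pi) * ((n : ℝ) - (n : ℝ) * ((n : ℝ) - 1) / 2 * (pi + (pi + pj)))) ≤
        pi * ((1 - pi) ^ n - (1 - (pi + pj)) ^ n) := mul_le_mul_of_nonneg_left k1 hpi
    have hk2 : pj * ((pi + pj - pj) * ((n : ℝ) - (n : ℝ) * ((n : ℝ) - 1) / 2 * (pj + (pi + pj)))) ≤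
        pj * ((1 - pj) ^ n - (1 - (pi + pj)) ^ n) := mul_le_mul_of_nonneg_left k2 hpj
    have expand : 1 - (1 - pi) ^ (n + 1) - (1 - pj) ^ (n + 1) + (1 - pi - pj) ^ (n + 1) =
        (1 - (1 - pi) ^ n - (1 - pj) ^ n + (1 - pi - pj) ^ n)
          + pi * ((1 - pi) ^ n - (1 - (pi + pj)) ^ n)
          + pj * ((1 - pj) ^ n - (1 - (pi + pj)) ^ n) := by ring
    push_cast
    rw [expand]
    push_cast at IH
    nlinarith [IH, hk1, hk2]
end

section
/- Let gamma in (0,1), and let (a_n)_{n>=1}, (x_n)_{n>=1} be sequences of positive reals with a_n = 1 + k*gamma/n + O(1/n^2) for a fixed positive integer k, and suppose x_{n+1} <= a_n x_n + K n^((k-1)gamma - 1) for all n >= i and some constant K > 0. Then sup_{n >= i} x_n / n^(k*gamma) < infinity. -/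
open Filter Asymptotics

set_option maxHeartbeats 1000000 in
/-- Abstract inductive moment bound: if `a_n = 1 + kγ/n + O(1/n²)` and
`x_{n+1} ≤ a_n x_n + K n^{(k-1)γ - 1}`, then `x_n = O(n^{kγ})` uniformly. -/
theorem moment_recursion_bound (γ : ℝ) (hγ0 : 0 < γ) (hγ1 : γ < 1)
    (k : ℕ) (hk : 0 < k) (i : ℕ) (hi : 1 ≤ i) (K : ℝ) (hK : 0 < K)
    (a x : ℕ → ℝ) (hapos : ∀ n, 0 < a n) (hxpos : ∀ n, 0 < x n)
    (ha : (fun n : ℕ => a n - (1 + (k : ℝ) * γ / n)) =O[atTop] fun n : ℕ => 1 / (n : ℝ) ^ 2)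
    (hrec : ∀ n, i ≤ n →
      x (n + 1) ≤ a n * x n + K * (n : ℝ) ^ (((k : ℝ) - 1) * γ - 1)) :
    ∃ M : ℝ, ∀ n, i ≤ n → x n / (n : ℝ) ^ ((k : ℝ) * γ) ≤ M := by
  set p : ℝ := (k : ℝ) * γ with hpdef
  have hk1 : (1 : ℝ) ≤ (k : ℝ) := by exact_mod_cast hk
  have hp : 0 < p := by nlinarith
  set y : ℕ → ℝ := fun n => x n / (n : ℝ) ^ p with hydef
  -- extract big-O constant
  obtain ⟨C₀, hC₀⟩ := ha.bound
  rw [eventually_atTop] at hC₀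
  obtain ⟨N₀, hN₀⟩ := hC₀
  set C' : ℝ := max C₀ 0 + p with hC'def
  have hC'pos : 0 < C' := by positivity
  set N : ℕ := max (max i 1) N₀ with hNdef
  have hNi : i ≤ N := le_trans (le_max_left i 1) (le_max_left _ _)
  have hN1 : 1 ≤ N := le_trans (le_max_right i 1) (le_max_left _ _)
  set c : ℕ → ℝ := fun n => C' / (n : ℝ) ^ 2 with hcdef
  set b : ℕ → ℝ := fun n => K * (n : ℝ) ^ (-γ - 1) with hbdef
  have hcnn : ∀ n, 0 ≤ c n := fun n => by positivity
  have hbnn : ∀ n, 0 ≤ b n := fun n => by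
    have := Real.rpow_nonneg (Nat.cast_nonneg n) (-γ - 1)
    simp only [hbdef]; positivity
  -- key one-step bound
  have hstep : ∀ n, N ≤ n → y (n + 1) ≤ (1 + c n) * y n + b n := by
    intro n hn
    have hn1 : 1 ≤ n := le_trans hN1 hn
    have hnpos : (0 : ℝ) < n := by exact_mod_cast hn1
    have hnppos : (0 : ℝ) < (n : ℝ) ^ p := Real.rpow_pos_of_pos hnpos _
    have hn1pos : (0 : ℝ) < (n : ℝ) + 1 := by linarith
    have hn1ppos : (0 : ℝ) < ((n : ℝ) + 1) ^ p := Real.rpow_pos_of_pos hn1pos _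
    -- Bernoulli-type lower bound : (1 + 1/n)^p ≥ 1 + p/n - p/n²
    have hbern : 1 + p / n - p / (n : ℝ) ^ 2 ≤ (1 + 1 / (n : ℝ)) ^ p := by
      have hs : (0 : ℝ) < 1 / (n : ℝ) := by positivity
      have hlog : 1 / (n : ℝ) - 1 / (n : ℝ) ^ 2 ≤ Real.log (1 + 1 / n) := by
        have h1 : 1 - (1 + 1 / (n : ℝ))⁻¹ ≤ Real.log (1 + 1 / n) :=
          Real.one_sub_inv_le_log_of_pos (by linarith)
        have h2 : 1 / (n : ℝ) - 1 / (n : ℝ) ^ 2 ≤ 1 - (1 + 1 / (n : ℝ))⁻¹ := by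
          have hinv : (1 + 1 / (n : ℝ))⁻¹ = (n : ℝ) / ((n : ℝ) + 1) := by
            rw [inv_eq_one_div]
            rw [show (1 : ℝ) + 1 / (n : ℝ) = ((n : ℝ) + 1) / (n : ℝ) by field_simp]
            rw [one_div_div]
          rw [hinv, show (1 : ℝ) - (n : ℝ) / ((n : ℝ) + 1) = 1 / ((n : ℝ) + 1) by
            field_simp; ring]
          rw [show 1 / (n : ℝ) - 1 / (n : ℝ) ^ 2 = ((n : ℝ) - 1) / (n : ℝ) ^ 2 by
            field_simp]
          rw [div_le_div_iff₀ (by positivity) (by positivity)]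
          nlinarith
        linarith
      have := Real.rpow_natCast
      rw [Real.rpow_def_of_pos (by linarith : (0:ℝ) < 1 + 1 / (n:ℝ))]
      calc 1 + p / n - p / (n : ℝ) ^ 2
          = p * (1 / n - 1 / (n : ℝ) ^ 2) + 1 := by ring
        _ ≤ Real.exp (p * (1 / n - 1 / (n : ℝ) ^ 2)) := Real.add_one_le_exp _
        _ ≤ Real.exp (Real.log (1 + 1 / n) * p) := by
            rw [Real.exp_le_exp]; rw [mul_comm]; exact mul_le_mul_of_nonneg_right hlog hp.le
    -- a n ≤ (1 + c n) * (1 + 1/n)^p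
    have habd : a n ≤ (1 + c n) * (1 + 1 / (n : ℝ)) ^ p := by
      have h1 := hN₀ n (le_trans (le_max_right _ _) hn)
      rw [Real.norm_eq_abs, Real.norm_eq_abs,
        abs_of_nonneg (by positivity : (0:ℝ) ≤ 1 / (n : ℝ) ^ 2)] at h1
      have h4 := (abs_le.mp h1).2
      have hone : (1 : ℝ) ≤ (1 + 1 / (n : ℝ)) ^ p := by
        apply Real.one_le_rpow ?_ hp.le
        have : (0 : ℝ) ≤ 1 / (n : ℝ) := by positivity
        linarith
      have hCmax : C₀ * (1 / (n : ℝ) ^ 2) ≤ max C₀ 0 / (n : ℝ) ^ 2 := by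
        rw [mul_one_div]; gcongr; exact le_max_left _ _
      have key : a n ≤ (1 + 1 / (n : ℝ)) ^ p + C' / (n : ℝ) ^ 2 := by
        have : a n ≤ 1 + p / n + max C₀ 0 / (n : ℝ) ^ 2 := by linarith
        have hsplit : (1:ℝ) + p / n + max C₀ 0 / (n : ℝ) ^ 2
            ≤ (1 + 1 / (n : ℝ)) ^ p + C' / (n : ℝ) ^ 2 := by
          have : C' / (n:ℝ)^2 = max C₀ 0 / (n:ℝ)^2 + p / (n:ℝ)^2 := by
            rw [hC'def]; ring
          rw [this]
          linarith [hbern]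
        linarith
      calc a n ≤ (1 + 1 / (n : ℝ)) ^ p + C' / (n : ℝ) ^ 2 := key
        _ ≤ (1 + 1 / (n : ℝ)) ^ p + C' / (n : ℝ) ^ 2 * (1 + 1/(n:ℝ)) ^ p := by
            nlinarith [hcnn n]
        _ = (1 + c n) * (1 + 1 / (n : ℝ)) ^ p := by rw [hcdef]; ring
    -- rewrite (1+1/n)^p as (n+1)^p / n^p
    have hdivp : (1 + 1 / (n : ℝ)) ^ p = ((n : ℝ) + 1) ^ p / (n : ℝ) ^ p := by
      rw [← Real.div_rpow (by linarith) hnpos.le]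
      congr 1
      field_simp
    -- bound the error term
    have herr : (n : ℝ) ^ (((k : ℝ) - 1) * γ - 1) ≤ ((n:ℝ)+1) ^ p * (n:ℝ) ^ (-γ - 1) := by
      have hexp : ((k : ℝ) - 1) * γ - 1 = p + (-γ - 1) := by rw [hpdef]; ring
      rw [hexp, Real.rpow_add hnpos]
      have : (n : ℝ) ^ p ≤ ((n : ℝ) + 1) ^ p :=
        Real.rpow_le_rpow hnpos.le (by linarith) hp.le
      have h0 : (0 : ℝ) ≤ (n : ℝ) ^ (-γ - 1) := Real.rpow_nonneg hnpos.le _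
      nlinarith
    -- assemble
    have hx1 : x (n + 1) ≤ ((1 + c n) * (x n / (n:ℝ)^p) + b n) * ((n:ℝ)+1) ^ p := by
      have h0 := hrec n (le_trans hNi hn)
      have h1 : a n * x n ≤ (1 + c n) * (((n:ℝ)+1)^p / (n:ℝ)^p) * x n := by
        rw [← hdivp]
        exact mul_le_mul_of_nonneg_right habd (hxpos n).le
      have h2 : K * (n : ℝ) ^ (((k : ℝ) - 1) * γ - 1) ≤ b n * ((n:ℝ)+1)^p := by
        rw [hbdef]
        calc K * (n : ℝ) ^ (((k : ℝ) - 1) * γ - 1)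
            ≤ K * (((n:ℝ)+1) ^ p * (n:ℝ) ^ (-γ - 1)) := by gcongr
          _ = K * (n:ℝ) ^ (-γ-1) * ((n:ℝ)+1)^p := by ring
      have heq : (1 + c n) * (((n:ℝ)+1)^p / (n:ℝ)^p) * x n
          = (1 + c n) * (x n / (n:ℝ)^p) * ((n:ℝ)+1)^p := by
        field_simp
      calc x (n+1) ≤ a n * x n + K * (n : ℝ) ^ (((k : ℝ) - 1) * γ - 1) := h0
        _ ≤ (1 + c n) * (x n / (n:ℝ)^p) * ((n:ℝ)+1)^p + b n * ((n:ℝ)+1)^p := by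
            rw [← heq]; exact add_le_add h1 h2
        _ = ((1 + c n) * (x n / (n:ℝ)^p) + b n) * ((n:ℝ)+1) ^ p := by ring
    show x (n+1) / ((n+1 : ℕ) : ℝ) ^ p ≤ _
    push_cast
    rw [div_le_iff₀ hn1ppos]
    exact hx1
  -- summability
  have hcsum : Summable c := by
    have h2 : Summable fun n : ℕ => 1 / (n : ℝ) ^ 2 :=
      Real.summable_one_div_nat_pow.mpr one_lt_two
    have : c = fun n : ℕ => C' * (1 / (n : ℝ) ^ 2) := by
      funext n; rw [hcdef]; ring
    rw [this]; exact h2.mul_left C'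
  have hbsum : Summable b := by
    have h2 : Summable fun n : ℕ => 1 / (n : ℝ) ^ (γ + 1) :=
      Real.summable_one_div_nat_rpow.mpr (by linarith)
    have : b = fun n : ℕ => K * (1 / (n : ℝ) ^ (γ + 1)) := by
      funext n
      rw [hbdef, one_div, ← Real.rpow_neg (Nat.cast_nonneg n)]
      ring_nf
    rw [this]; exact h2.mul_left K
  -- Grönwall invariant
  have hinv : ∀ n, N ≤ n → y n ≤ (y N + ∑ m ∈ Finset.Ico N n, b m) *
      ∏ m ∈ Finset.Ico N n, (1 + c m) := by
    intro n hn
    induction n, hn using Nat.le_induction with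
    | base => simp
    | succ n hn ih =>
      have hPnn : 0 ≤ ∏ m ∈ Finset.Ico N n, (1 + c m) :=
        Finset.prod_nonneg fun m _ => by linarith [hcnn m]
      have hP1 : 1 ≤ ∏ m ∈ Finset.Ico N (n+1), (1 + c m) := by
        calc (1:ℝ) = ∏ m ∈ Finset.Ico N (n+1), 1 := by simp
          _ ≤ ∏ m ∈ Finset.Ico N (n+1), (1 + c m) :=
              Finset.prod_le_prod (fun m _ => zero_le_one) (fun m _ => by linarith [hcnn m])
      calc y (n+1) ≤ (1 + c n) * y n + b n := hstep n hn
        _ ≤ (1 + c n) * ((y N + ∑ m ∈ Finset.Ico N n, b m) *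
              ∏ m ∈ Finset.Ico N n, (1 + c m)) + b n := by
            have h1 : (0:ℝ) ≤ 1 + c n := by linarith [hcnn n]
            nlinarith [mul_le_mul_of_nonneg_left ih h1]
        _ = (y N + ∑ m ∈ Finset.Ico N n, b m) *
              ∏ m ∈ Finset.Ico N (n+1), (1 + c m) + b n := by
            rw [Finset.prod_Ico_succ_top hn]; ring
        _ ≤ (y N + ∑ m ∈ Finset.Ico N n, b m) *
              ∏ m ∈ Finset.Ico N (n+1), (1 + c m) +
              b n * ∏ m ∈ Finset.Ico N (n+1), (1 + c m) := by
            nlinarith [hbnn n]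
        _ = (y N + ∑ m ∈ Finset.Ico N (n+1), b m) *
              ∏ m ∈ Finset.Ico N (n+1), (1 + c m) := by
            rw [Finset.sum_Ico_succ_top hn]; ring
  -- uniform bound for n ≥ N
  have hyNpos : 0 < y N := by
    have : (0:ℝ) < (N : ℝ) ^ p :=
      Real.rpow_pos_of_pos (by exact_mod_cast hN1 : (0:ℝ) < N) _
    exact div_pos (hxpos N) this
  set Bt : ℝ := ∑' m, b m with hBt
  have hBtnn : 0 ≤ Bt := tsum_nonneg hbnn
  set E : ℝ := Real.exp (∑' m, c m) with hE
  set M₁ : ℝ := (y N + Bt) * E with hM₁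
  have hM₁nn : 0 ≤ M₁ := by positivity
  have hbig : ∀ n, N ≤ n → y n ≤ M₁ := by
    intro n hn
    have hBle : ∑ m ∈ Finset.Ico N n, b m ≤ Bt :=
      Summable.sum_le_tsum _ (fun m _ => hbnn m) hbsum
    have hPle : ∏ m ∈ Finset.Ico N n, (1 + c m) ≤ E := by
      calc ∏ m ∈ Finset.Ico N n, (1 + c m)
          ≤ ∏ m ∈ Finset.Ico N n, Real.exp (c m) :=
            Finset.prod_le_prod (fun m _ => by linarith [hcnn m])
              (fun m _ => by linarith [Real.add_one_le_exp (c m)])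
        _ = Real.exp (∑ m ∈ Finset.Ico N n, c m) := (Real.exp_sum _ _).symm
        _ ≤ E := Real.exp_le_exp.mpr (Summable.sum_le_tsum _ (fun m _ => hcnn m) hcsum)
    calc y n ≤ (y N + ∑ m ∈ Finset.Ico N n, b m) *
          ∏ m ∈ Finset.Ico N n, (1 + c m) := hinv n hn
      _ ≤ (y N + Bt) * E := by
          apply mul_le_mul (by linarith) hPle
            (Finset.prod_nonneg fun m _ => by linarith [hcnn m]) (by positivity)
      _ = M₁ := rfl
  -- finitely many small n
  refine ⟨M₁ + ∑ m ∈ Finset.Icc i N, y m, fun n hn => ?_⟩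
  have hsumnn : 0 ≤ ∑ m ∈ Finset.Icc i N, y m :=
    Finset.sum_nonneg fun m _ => div_nonneg (hxpos m).le (Real.rpow_nonneg (Nat.cast_nonneg m) _)
  rcases le_or_gt N n with h | h
  · have := hbig n h
    show y n ≤ _
    linarith
  · have hmem : n ∈ Finset.Icc i N := Finset.mem_Icc.mpr ⟨hn, h.le⟩
    have := Finset.single_le_sum
      (f := y) (fun m _ => div_nonneg (hxpos m).le (Real.rpow_nonneg (Nat.cast_nonneg m) _)) hmem
    show y n ≤ _
    linarith
end
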